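/- Let M : ℕ → ℝ be a weight sequence in the class LC, with m_p := M_p/p!. Then the associated weight function ω_M satisfies (α1), i.e. there exists C ≥ 1 such that for every λ ≥ 1 there exists D ≥ 1 with ω_M(λ·t) ≤ C·λ·ω_M(t) + D·λ for all t ≥ 0, if and only if there exist a positive integer C and B ≥ 1 such that for every positive integer λ there exists D ≥ 1 with λ·(M_p)^{1/p} ≤ B·D^{1/p}·(M_{λ·C·p})^{1/(λ·C·p)} for all p ≥ 1 (equivalently, the same condition for m: there exist a positive integer C and A ≥ 1 such that for every positive integer λ there exists D ≥ 1 with (m_p)^{1/p} ≤ A·D^{1/p}·(m_{λ·C·p})^{1/(λ·C·p)} for all p ≥ 1). -/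

import Mathlib

/-!
Write `ℓ_p = log M_p`. Log-convexity makes `ℓ` a convex sequence, so `ℓ_p / p` is nondecreasing
and `ω_M(t) = sup_p (p log t - ℓ_p)` is attained at `p` when `log t = ℓ_{p+1} - ℓ_p`. Taking
logarithms, both root conditions become `log λ + ℓ_p/p ≤ b + d/p + ℓ_{λCp}/(λCp)`; for `m` this uses
`p/e ≤ (p!)^{1/p} ≤ p`. Testing `(α1)` at `t = μ_{p+1}` against the index `λCp` of `ω_M(λt)` gives
this inequality with `b = 0`. Conversely it bounds `ω_M(λt)` for integer `λ` (a constant `b` is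
absorbed by enlarging `λ` by the factor `⌈e^b⌉`), and real `λ` reduce to `⌈λ⌉` because `ω_M` is
nondecreasing.
-/

open Filter Real Asymptotics

/-- The associated weight function of a weight sequence `M`. -/
noncomputable def omegaM (M : ℕ → ℝ) (t : ℝ) : ℝ :=
  if t = 0 then 0 else ⨆ p : ℕ, Real.log (t ^ p / M p)

/-- The class `LC`: positive, normalized, log-convex weight sequences whose
`p`-th roots tend to infinity. -/
def IsLC (M : ℕ → ℝ) : Prop :=
  (∀ p, 0 < M p) ∧ M 0 = 1 ∧ M 0 ≤ M 1 ∧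
  (∀ p : ℕ, 1 ≤ p → (M p) ^ 2 ≤ M (p - 1) * M (p + 1)) ∧
  Filter.Tendsto (fun p : ℕ => (M p) ^ (1 / (p : ℝ))) Filter.atTop Filter.atTop

/-- The quotient sequence `μ_0 = 1`, `μ_p = M_p / M_{p-1}`. -/
noncomputable def mu (M : ℕ → ℝ) (p : ℕ) : ℝ :=
  if p = 0 then 1 else M p / M (p - 1)

/-- Moderate growth `(mg)`. -/
def HasMG (M : ℕ → ℝ) : Prop :=
  ∃ C : ℝ, 1 ≤ C ∧ ∀ p q : ℕ, M (p + q) ≤ C ^ (p + q) * M p * M q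

/-- `m_p := M_p / p!`. -/
noncomputable def mseq (M : ℕ → ℝ) (p : ℕ) : ℝ := M p / (Nat.factorial p)

/-- Young conjugate of `x ↦ ω_M(eˣ)`. -/
noncomputable def phiStar (M : ℕ → ℝ) (y : ℝ) : ℝ :=
  sSup ((fun x => x * y - omegaM M (Real.exp x)) '' Set.Ici (0 : ℝ))

/-- The weight matrix associated with `ω_M`: `M^{(l)}_p := exp((1/l)·φ*(l·p))`. -/
noncomputable def MMat (M : ℕ → ℝ) (l : ℝ) (p : ℕ) : ℝ :=
  Real.exp ((1 / l) * phiStar M (l * p))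

/-- `m^{(l)}_p := M^{(l)}_p / p!`. -/
noncomputable def mMat (M : ℕ → ℝ) (l : ℝ) (p : ℕ) : ℝ :=
  MMat M l p / (Nat.factorial p)

/-- The Roumieu root-almost-increasing condition `(M_{rai})` for the weight matrix
associated with `ω_M`. -/
def MRai (M : ℕ → ℝ) : Prop :=
  ∀ x : ℝ, 0 < x → ∃ C : ℝ, 0 < C ∧ ∃ y : ℝ, 0 < y ∧
    ∀ p q : ℕ, 1 ≤ p → p ≤ q →
      (mMat M x p) ^ (1 / (p : ℝ)) ≤ C * (mMat M y q) ^ (1 / (q : ℝ))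

/-- `M ≼ N` : `sup_{p ≥ 1} (M_p/N_p)^{1/p} < ∞`. -/
def Precsim (M N : ℕ → ℝ) : Prop :=
  ∃ A : ℝ, ∀ p : ℕ, 1 ≤ p → (M p / N p) ^ (1 / (p : ℝ)) ≤ A

/-- `M ≈ N` : mutual `≼`. -/
def Approx (M N : ℕ → ℝ) : Prop := Precsim M N ∧ Precsim N M

/-- Condition `(ω1)` for a weight function. -/
def Omega1 (w : ℝ → ℝ) : Prop :=
  ∃ L : ℝ, 1 ≤ L ∧ ∀ t : ℝ, 0 ≤ t → w (2 * t) ≤ L * (w t + 1)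

/-- Condition `(α0)` (in the rewritten form valid for all `t ≥ 0`). -/
def Alpha0 (w : ℝ → ℝ) : Prop :=
  ∃ C : ℝ, 1 ≤ C ∧ ∃ D : ℝ, 1 ≤ D ∧ ∀ lam : ℝ, 1 ≤ lam → ∀ t : ℝ, 0 ≤ t →
    w (lam * t) ≤ C * lam * w t + D * lam

section ConvexSequence

variable {f : ℕ → ℝ}

lemma mul_fwdDiff_le_sub (hf : Monotone fun n => f (n + 1) - f n) {a b : ℕ} (hab : a ≤ b) :
    ((b : ℝ) - a) * (f (a + 1) - f a) ≤ f b - f a := by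
  induction b, hab using Nat.le_induction with
  | base => simp
  | succ n hn ih =>
    have := hf hn
    push_cast
    linarith

lemma sub_le_mul_fwdDiff (hf : Monotone fun n => f (n + 1) - f n) {a b : ℕ} (hab : a ≤ b) :
    f b - f a ≤ ((b : ℝ) - a) * (f (b + 1) - f b) := by
  induction b, hab using Nat.le_induction with
  | base => simp
  | succ n hn ih =>
    have := hf (Nat.le_succ n)
    have hna : (a : ℝ) ≤ n := by exact_mod_cast hn
    push_cast
    nlinarith

lemma add_mul_fwdDiff_le (hf : Monotone fun n => f (n + 1) - f n) (p k : ℕ) :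
    f p + ((k : ℝ) - p) * (f (p + 1) - f p) ≤ f k := by
  rcases le_total p k with hpk | hkp
  · linarith [mul_fwdDiff_le_sub hf hpk]
  · linarith [sub_le_mul_fwdDiff hf hkp]

lemma div_le_div_of_monotone_fwdDiff (hf : Monotone fun n => f (n + 1) - f n) (h0 : f 0 = 0)
    {p q : ℕ} (hp : 1 ≤ p) (hpq : p ≤ q) : f p / p ≤ f q / q := by
  induction q, hpq using Nat.le_induction with
  | base => exact le_rfl
  | succ n hn ih =>
    refine ih.trans ?_
    have hn0 : (0 : ℝ) < n := by exact_mod_cast hp.trans hn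
    have := sub_le_mul_fwdDiff hf (Nat.zero_le n)
    rw [div_le_div_iff₀ hn0 (by positivity)]
    push_cast at this ⊢
    nlinarith

end ConvexSequence

lemma mul_rpow_le_mul_rpow_iff_log {a x B D y : ℝ} (ha : 0 < a) (hx : 0 < x) (hB : 0 < B)
    (hD : 0 < D) (hy : 0 < y) (p q : ℝ) :
    a * x ^ (1 / p) ≤ B * D ^ (1 / p) * y ^ (1 / q) ↔
      log a + log x / p ≤ log B + log D / p + log y / q := by
  rw [← Real.log_le_log_iff (by positivity) (by positivity), Real.log_mul ha.ne' (by positivity),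
    Real.log_mul (by positivity) (by positivity), Real.log_mul hB.ne' (by positivity),
    Real.log_rpow hx, Real.log_rpow hD, Real.log_rpow hy]
  simp only [one_div_mul_eq_div]

lemma log_factorial_div_le_log (p : ℕ) : log (p.factorial : ℝ) / p ≤ log p := by
  rcases p.eq_zero_or_pos with rfl | hp
  · simp
  have hp' : (0 : ℝ) < p := by exact_mod_cast hp
  rw [div_le_iff₀ hp', mul_comm, ← Real.log_pow]
  exact Real.log_le_log (by positivity) (by exact_mod_cast p.factorial_le_pow)

lemma log_sub_one_le_log_factorial_div {p : ℕ} (hp : 0 < p) :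
    log p - 1 ≤ log (p.factorial : ℝ) / p := by
  have hp' : (0 : ℝ) < p := by exact_mod_cast hp
  have h := Real.log_le_log (by positivity) (Real.pow_div_factorial_le_exp (p : ℝ) hp'.le p)
  rw [Real.log_div (by positivity) (by positivity), Real.log_pow, Real.log_exp] at h
  rw [le_div_iff₀ hp']
  linarith

lemma log_natCast_mul_mul {a b c : ℕ} (ha : a ≠ 0) (hb : b ≠ 0) (hc : c ≠ 0) :
    log ((a * b * c : ℕ) : ℝ) = log a + log b + log c := by
  push_cast
  rw [Real.log_mul (by positivity) (by positivity), Real.log_mul (by positivity) (by positivity)]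

def Alpha1 (w : ℝ → ℝ) : Prop :=
  ∃ C : ℝ, 1 ≤ C ∧ ∀ lam : ℝ, 1 ≤ lam → ∃ D : ℝ, 1 ≤ D ∧ ∀ t : ℝ, 0 ≤ t →
    w (lam * t) ≤ C * lam * w t + D * lam

/-- The logarithm of `λ M_p^{1/p} ≤ e^b e^{d/p} M_{λCp}^{1/(λCp)}`. -/
def LogRootCond (M : ℕ → ℝ) (b : ℝ) (C : ℕ) : Prop :=
  ∀ lam : ℕ, 1 ≤ lam → ∃ d : ℝ, 0 ≤ d ∧ ∀ p : ℕ, 1 ≤ p →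
    log lam + log (M p) / p ≤ b + d / p + log (M (lam * C * p)) / (lam * C * p)

def RootCond (M : ℕ → ℝ) : Prop :=
  ∃ C : ℕ, 1 ≤ C ∧ ∃ B : ℝ, 1 ≤ B ∧ ∀ lam : ℕ, 1 ≤ lam → ∃ D : ℝ, 1 ≤ D ∧
    ∀ p : ℕ, 1 ≤ p → (lam : ℝ) * (M p) ^ (1 / (p : ℝ)) ≤
      B * D ^ (1 / (p : ℝ)) * (M (lam * C * p)) ^ (1 / ((lam : ℝ) * C * p))

def RootCondMseq (M : ℕ → ℝ) : Prop :=
  ∃ C : ℕ, 1 ≤ C ∧ ∃ A : ℝ, 1 ≤ A ∧ ∀ lam : ℕ, 1 ≤ lam → ∃ D : ℝ, 1 ≤ D ∧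
    ∀ p : ℕ, 1 ≤ p → (mseq M p) ^ (1 / (p : ℝ)) ≤
      A * D ^ (1 / (p : ℝ)) * (mseq M (lam * C * p)) ^ (1 / ((lam : ℝ) * C * p))

section WeightFunction

variable {M : ℕ → ℝ}

lemma IsLC.monotone_log_fwdDiff (hM : IsLC M) :
    Monotone fun n => log (M (n + 1)) - log (M n) := by
  refine monotone_nat_of_le_succ fun n => ?_
  have hpos := hM.1
  have h := Real.log_le_log (pow_pos (hpos _) 2) (hM.2.2.2.1 (n + 1) (Nat.le_add_left 1 n))
  rw [Real.log_pow, Real.log_mul (hpos _).ne' (hpos _).ne'] at h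
  simp only [Nat.add_sub_cancel] at h
  push_cast at h
  linarith

lemma omegaM_zero : omegaM M 0 = 0 := by simp [omegaM]

lemma omegaM_eq_iSup (hpos : ∀ p, 0 < M p) {t : ℝ} (ht : 0 < t) :
    omegaM M t = ⨆ p : ℕ, ((p : ℝ) * log t - log (M p)) := by
  simp only [omegaM, if_neg ht.ne', Real.log_div (pow_pos ht _).ne' (hpos _).ne', Real.log_pow]

lemma bddAbove_range_mul_log_sub_log (hpos : ∀ p, 0 < M p)
    (hlim : Tendsto (fun p : ℕ => M p ^ (1 / (p : ℝ))) atTop atTop) {t : ℝ} (ht : 0 < t) :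
    BddAbove (Set.range fun p : ℕ => (p : ℝ) * log t - log (M p)) := by
  obtain ⟨P, hP⟩ := eventually_atTop.1 (hlim.eventually_ge_atTop t)
  refine ⟨max ((Finset.range (P + 1)).sup' (by simp)
    fun p : ℕ => (p : ℝ) * log t - log (M p)) 0, ?_⟩
  rintro _ ⟨p, rfl⟩
  rcases le_or_gt p P with hp | hp
  · exact le_max_of_le_left (Finset.le_sup' (fun p : ℕ => (p : ℝ) * log t - log (M p))
      (Finset.mem_range_succ_iff.2 hp))
  · refine le_max_of_le_right ?_
    have hp0 : (0 : ℝ) < p := by exact_mod_cast (Nat.zero_le P).trans_lt hp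
    have h := Real.log_le_log ht (hP p hp.le)
    rw [Real.log_rpow (hpos p), one_div, inv_mul_eq_div, le_div_iff₀' hp0] at h
    exact sub_nonpos.2 h

lemma le_omegaM (hpos : ∀ p, 0 < M p)
    (hlim : Tendsto (fun p : ℕ => M p ^ (1 / (p : ℝ))) atTop atTop) {t : ℝ} (ht : 0 < t) (p : ℕ) :
    (p : ℝ) * log t - log (M p) ≤ omegaM M t := by
  rw [omegaM_eq_iSup hpos ht]
  exact le_ciSup (bddAbove_range_mul_log_sub_log hpos hlim ht) p

lemma omegaM_le (hpos : ∀ p, 0 < M p) {t c : ℝ} (ht : 0 < t)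
    (h : ∀ p : ℕ, (p : ℝ) * log t - log (M p) ≤ c) : omegaM M t ≤ c := by
  rw [omegaM_eq_iSup hpos ht]
  exact ciSup_le h

lemma omegaM_nonneg (hpos : ∀ p, 0 < M p)
    (hlim : Tendsto (fun p : ℕ => M p ^ (1 / (p : ℝ))) atTop atTop) (hM0 : M 0 = 1) {t : ℝ}
    (ht : 0 ≤ t) : 0 ≤ omegaM M t := by
  rcases ht.eq_or_lt with rfl | ht
  · rw [omegaM_zero]
  · simpa [hM0] using le_omegaM hpos hlim ht 0

lemma omegaM_mono (hpos : ∀ p, 0 < M p)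
    (hlim : Tendsto (fun p : ℕ => M p ^ (1 / (p : ℝ))) atTop atTop) {t s : ℝ} (ht : 0 < t)
    (hts : t ≤ s) : omegaM M t ≤ omegaM M s := by
  refine omegaM_le hpos ht fun p => le_trans ?_ (le_omegaM hpos hlim (ht.trans_le hts) p)
  gcongr

lemma omegaM_exp_log_fwdDiff_le (hpos : ∀ p, 0 < M p)
    (hconv : Monotone fun n => log (M (n + 1)) - log (M n)) (p : ℕ) :
    omegaM M (exp (log (M (p + 1)) - log (M p))) ≤
      p * (log (M (p + 1)) - log (M p)) - log (M p) := by
  refine omegaM_le hpos (Real.exp_pos _) fun k => ?_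
  rw [Real.log_exp]
  linarith [add_mul_fwdDiff_le (f := fun n => log (M n)) hconv p k]

lemma IsLC.logRootCond_of_alpha1 (hM : IsLC M) (h : Alpha1 (omegaM M)) :
    ∃ C : ℕ, 1 ≤ C ∧ LogRootCond M 0 C := by
  obtain ⟨C₀, hC₀, h⟩ := h
  refine ⟨⌈C₀⌉₊, Nat.one_le_ceil_iff.2 (by linarith), fun lam hlam => ?_⟩
  have hCC₀ : C₀ ≤ ⌈C₀⌉₊ := Nat.le_ceil C₀
  set C : ℕ := ⌈C₀⌉₊
  have hlam1 : (1 : ℝ) ≤ lam := by exact_mod_cast hlam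
  obtain ⟨D, hD, h⟩ := h lam hlam1
  refine ⟨D, by linarith, fun p hp => ?_⟩
  have hpos := hM.1
  have hlim := hM.2.2.2.2
  set s := log (M (p + 1)) - log (M p)
  set q : ℕ := lam * C * p with hq
  have hp0 : (0 : ℝ) < p := by exact_mod_cast hp
  have hq' : (q : ℝ) = lam * C * p := by push_cast [hq]; rfl
  have hω0 : 0 ≤ omegaM M (exp s) := omegaM_nonneg hpos hlim hM.2.1 (Real.exp_pos s).le
  have hlower : q * (log lam + s) - log (M q) ≤ omegaM M (lam * exp s) := by
    simpa [Real.log_mul (by positivity : (lam : ℝ) ≠ 0) (Real.exp_pos s).ne']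
      using le_omegaM hpos hlim (t := lam * exp s) (by positivity) q
  have hupper : omegaM M (lam * exp s) ≤ C * lam * (p * s - log (M p)) + D * lam :=
    calc omegaM M (lam * exp s) ≤ C₀ * lam * omegaM M (exp s) + D * lam :=
          h _ (Real.exp_pos s).le
      _ ≤ C * lam * omegaM M (exp s) + D * lam := by gcongr
      _ ≤ C * lam * (p * s - log (M p)) + D * lam := by
          gcongr
          exact omegaM_exp_log_fwdDiff_le hpos hM.monotone_log_fwdDiff p
  have key : q * log lam + C * lam * log (M p) ≤ log (M q) + D * lam := by
    rw [hq'] at hlower ⊢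
    linarith
  have hC1 : (1 : ℝ) ≤ C := hC₀.trans hCC₀
  rw [← hq', zero_add]
  calc log lam + log (M p) / p
        = (q * log lam + C * lam * log (M p)) / q := by
          rw [hq']; field_simp
    _ ≤ (log (M q) + D * lam) / q := by gcongr
    _ = D / (C * p) + log (M q) / q := by
          rw [hq']; field_simp; ring
    _ ≤ D / p + log (M q) / q := by
          gcongr
          exact le_mul_of_one_le_left hp0.le hC1

/-- Since `(log M_k)/k` is nondecreasing, the condition at `p` absorbs the factor `λ^k` for every
`k ≥ λCp`. -/
lemma IsLC.mul_log_mul_sub_log_le (hM : IsLC M) {lam C p k : ℕ} (hlam : 1 ≤ lam) (hC : 1 ≤ C)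
    (hp : 1 ≤ p) {d t : ℝ} (hd : 0 ≤ d) (ht : 0 < t)
    (hcond : log lam + log (M p) / p ≤ d / p + log (M (lam * C * p)) / (lam * C * p))
    (hk : lam * C * p ≤ k) (hk' : k ≤ 2 * (lam * C * p)) :
    k * (log lam + log t) - log (M k) ≤ 2 * C * lam * (omegaM M t + d) := by
  have hp0 : (0 : ℝ) < p := by exact_mod_cast hp
  have hk0 : (0 : ℝ) < k := by
    exact_mod_cast (Nat.one_le_iff_ne_zero.2 (by positivity)).trans hk
  have hratio : (k : ℝ) / p ≤ 2 * C * lam := by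
    rw [div_le_iff₀ hp0]
    have : (k : ℝ) ≤ 2 * (lam * C * p) := by exact_mod_cast hk'
    linarith
  have hmono : log (M (lam * C * p)) / (lam * C * p) ≤ log (M k) / k := by
    exact_mod_cast div_le_div_of_monotone_fwdDiff (f := fun n => log (M n))
      hM.monotone_log_fwdDiff (by simp [hM.2.1]) (Nat.one_le_iff_ne_zero.2 (by positivity)) hk
  have hLk : k * (log lam + log (M p) / p - d / p) ≤ log (M k) :=
    calc k * (log lam + log (M p) / p - d / p) ≤ k * (log (M k) / k) := by
          gcongr
          linarith
      _ = log (M k) := by field_simp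
  calc k * (log lam + log t) - log (M k)
        ≤ k / p * (p * log t - log (M p)) + k / p * d := by
          have : k / p * (p * log t - log (M p)) + k / p * d =
              k * (log t - log (M p) / p + d / p) := by field_simp
          rw [this]
          linarith
    _ ≤ k / p * omegaM M t + k / p * d := by gcongr; exact le_omegaM hM.1 hM.2.2.2.2 ht p
    _ = k / p * (omegaM M t + d) := by ring
    _ ≤ 2 * C * lam * (omegaM M t + d) := by
          gcongr
          linarith [omegaM_nonneg hM.1 hM.2.2.2.2 hM.2.1 ht.le]

/-- Indices `k < λC` of `ω_M(λt) = sup_k (k log(λt) - log M_k)` cost at most `λC log λ + ω_M(t)`;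
for the others take `p = ⌊k/(λC)⌋` in `IsLC.mul_log_mul_sub_log_le`. -/
lemma IsLC.exists_omegaM_natCast_mul_le (hM : IsLC M) {C : ℕ} (hC : 1 ≤ C)
    (h : LogRootCond M 0 C) {lam : ℕ} (hlam : 1 ≤ lam) :
    ∃ D : ℝ, 1 ≤ D ∧ ∀ t : ℝ, 0 ≤ t → omegaM M (lam * t) ≤ 2 * C * lam * omegaM M t + D * lam := by
  obtain ⟨d, hd, h⟩ := h lam hlam
  have hlog_lam : 0 ≤ log lam := Real.log_natCast_nonneg lam
  have hD : 0 ≤ C * log lam + 2 * C * d := by positivity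
  refine ⟨C * log lam + 2 * C * d + 1, by linarith, fun t ht => ?_⟩
  rcases ht.eq_or_lt with rfl | ht
  · rw [mul_zero, omegaM_zero]
    positivity
  have hω := omegaM_nonneg hM.1 hM.2.2.2.2 hM.2.1 ht.le
  have hCl : (1 : ℝ) ≤ C * lam := one_le_mul_of_one_le_of_one_le (by exact_mod_cast hC)
    (by exact_mod_cast hlam)
  refine omegaM_le hM.1 (by positivity) fun k => ?_
  rw [Real.log_mul (by positivity) ht.ne']
  rcases lt_or_ge k (lam * C) with hk | hk
  · have hk' : (k : ℝ) ≤ C * lam := by rw [mul_comm]; exact_mod_cast hk.le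
    have := le_omegaM hM.1 hM.2.2.2.2 ht k
    have : (k : ℝ) * log lam ≤ C * lam * log lam := by gcongr
    nlinarith
  · have hp : 1 ≤ k / (lam * C) := (Nat.one_le_div_iff (by positivity)).2 hk
    have := hM.mul_log_mul_sub_log_le (k := k) hlam hC hp hd ht (by linarith [h _ hp])
      (by rw [mul_comm]; exact Nat.div_mul_le_self k _)
      (by have := Nat.lt_mul_div_succ k (by positivity : 0 < lam * C); nlinarith)
    nlinarith

lemma LogRootCond.exists_logRootCond_zero {b : ℝ} {C : ℕ} (hC : 1 ≤ C) (h : LogRootCond M b C) :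
    ∃ C' : ℕ, 1 ≤ C' ∧ LogRootCond M 0 C' := by
  set N := ⌈exp b⌉₊
  have hN : 1 ≤ N := Nat.one_le_ceil_iff.2 (Real.exp_pos b)
  have hbN : b ≤ log N := by
    rw [← Real.log_exp b]
    exact Real.log_le_log (Real.exp_pos b) (Nat.le_ceil _)
  refine ⟨N * C, Nat.one_le_iff_ne_zero.2 (by positivity), fun lam hlam => ?_⟩
  obtain ⟨d, hd, h⟩ := h (lam * N) (Nat.one_le_iff_ne_zero.2 (by positivity))
  refine ⟨d, hd, fun p hp => ?_⟩
  have h := h p hp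
  rw [Nat.cast_mul, Real.log_mul (by positivity) (by positivity)] at h
  rw [← mul_assoc, Nat.cast_mul N C, ← mul_assoc]
  linarith

lemma IsLC.alpha1_of_logRootCond (hM : IsLC M) {C : ℕ} (hC : 1 ≤ C) (h : LogRootCond M 0 C) :
    Alpha1 (omegaM M) := by
  have hC' : (1 : ℝ) ≤ C := by exact_mod_cast hC
  refine ⟨4 * C, by linarith, fun lam hlam => ?_⟩
  set n := ⌈lam⌉₊
  have hn : 1 ≤ n := Nat.one_le_ceil_iff.2 (by linarith)
  have hn_le : (n : ℝ) ≤ 2 * lam := by linarith [Nat.ceil_lt_add_one (by linarith : 0 ≤ lam)]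
  obtain ⟨D, hD, hbound⟩ := hM.exists_omegaM_natCast_mul_le hC h hn
  refine ⟨2 * D, by linarith, fun t ht => ?_⟩
  have hω := omegaM_nonneg hM.1 hM.2.2.2.2 hM.2.1 ht
  have hmono : omegaM M (lam * t) ≤ omegaM M (n * t) := by
    rcases ht.eq_or_lt with rfl | ht
    · simp
    · exact omegaM_mono hM.1 hM.2.2.2.2 (by positivity) (by gcongr; exact Nat.le_ceil lam)
  calc omegaM M (lam * t) ≤ 2 * C * n * omegaM M t + D * n := hmono.trans (hbound t ht)
    _ ≤ 2 * C * (2 * lam) * omegaM M t + D * (2 * lam) := by gcongr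
    _ = 4 * C * lam * omegaM M t + 2 * D * lam := by ring

theorem IsLC.alpha1_iff_logRootCond (hM : IsLC M) :
    Alpha1 (omegaM M) ↔ ∃ C : ℕ, 1 ≤ C ∧ ∃ b : ℝ, 0 ≤ b ∧ LogRootCond M b C := by
  constructor
  · intro h
    obtain ⟨C, hC, h⟩ := hM.logRootCond_of_alpha1 h
    exact ⟨C, hC, 0, le_rfl, h⟩
  · rintro ⟨C, hC, b, -, h⟩
    obtain ⟨C', hC', h'⟩ := h.exists_logRootCond_zero hC
    exact hM.alpha1_of_logRootCond hC' h'

lemma rootCond_iff_logRootCond (hpos : ∀ p, 0 < M p) :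
    RootCond M ↔ ∃ C : ℕ, 1 ≤ C ∧ ∃ b : ℝ, 0 ≤ b ∧ LogRootCond M b C := by
  constructor
  · rintro ⟨C, hC, B, hB, h⟩
    refine ⟨C, hC, log B, Real.log_nonneg hB, fun lam hlam => ?_⟩
    obtain ⟨D, hD, h⟩ := h lam hlam
    refine ⟨log D, Real.log_nonneg hD, fun p hp => ?_⟩
    exact (mul_rpow_le_mul_rpow_iff_log (by exact_mod_cast hlam) (hpos _) (by positivity)
      (by positivity) (hpos _) _ _).1 (h p hp)
  · rintro ⟨C, hC, b, hb, h⟩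
    refine ⟨C, hC, exp b, Real.one_le_exp hb, fun lam hlam => ?_⟩
    obtain ⟨d, hd, h⟩ := h lam hlam
    refine ⟨exp d, Real.one_le_exp hd, fun p hp => ?_⟩
    rw [mul_rpow_le_mul_rpow_iff_log (by exact_mod_cast hlam) (hpos _) (by positivity)
      (by positivity) (hpos _), Real.log_exp, Real.log_exp]
    exact h p hp

lemma log_mseq (hpos : ∀ p, 0 < M p) (p : ℕ) :
    log (mseq M p) = log (M p) - log (p.factorial : ℝ) :=
  Real.log_div (hpos p).ne' (by positivity)

lemma rootCondMseq_iff_logRootCond (hpos : ∀ p, 0 < M p) :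
    RootCondMseq M ↔ ∃ C : ℕ, 1 ≤ C ∧ ∃ b : ℝ, 0 ≤ b ∧ LogRootCond M b C := by
  have hmpos : ∀ p, 0 < mseq M p := fun p => div_pos (hpos p) (by positivity)
  constructor
  · rintro ⟨C, hC, A, hA, h⟩
    refine ⟨C, hC, log A + 1, by linarith [Real.log_nonneg hA], fun lam hlam => ?_⟩
    obtain ⟨D, hD, h⟩ := h lam hlam
    refine ⟨log D, Real.log_nonneg hD, fun p hp => ?_⟩
    have h := (mul_rpow_le_mul_rpow_iff_log one_pos (hmpos _) (by positivity) (by positivity)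
      (hmpos _) _ _).1 ((one_mul _).trans_le (h p hp))
    have hq := log_natCast_mul_mul (a := lam) (b := C) (c := p) (by omega) (by omega) (by omega)
    have hFq :=
      log_sub_one_le_log_factorial_div (Nat.pos_of_ne_zero (by positivity : lam * C * p ≠ 0))
    have hFp := log_factorial_div_le_log p
    have hlogC := Real.log_natCast_nonneg C
    rw [log_mseq hpos, log_mseq hpos, sub_div, sub_div, Real.log_one] at h
    push_cast at hq hFq
    linarith
  · rintro ⟨C, hC, b, hb, h⟩
    have hC' : (1 : ℝ) ≤ C := by exact_mod_cast hC
    refine ⟨C, hC, exp (b + 1) * C, ?_, fun lam hlam => ?_⟩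
    · nlinarith [Real.one_le_exp (by linarith : 0 ≤ b + 1)]
    obtain ⟨d, hd, h⟩ := h lam hlam
    refine ⟨exp d, Real.one_le_exp hd, fun p hp => ?_⟩
    rw [← one_mul (mseq M p ^ _), mul_rpow_le_mul_rpow_iff_log one_pos (hmpos _) (by positivity)
      (by positivity) (hmpos _), Real.log_exp, Real.log_mul (by positivity) (by positivity),
      Real.log_exp, Real.log_one, log_mseq hpos, log_mseq hpos, sub_div, sub_div]
    have hq := log_natCast_mul_mul (a := lam) (b := C) (c := p) (by omega) (by omega) (by omega)
    have hFq := log_factorial_div_le_log (lam * C * p)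
    have hFp := log_sub_one_le_log_factorial_div hp
    push_cast at hq hFq
    linarith [h p hp]

end WeightFunction

/-- Corollary 5.2: characterization of `(α1)` for `ω_M` in terms of `M` resp. `m`. -/
theorem stmt18 (M : ℕ → ℝ) (hM : IsLC M) :
    ((∃ C : ℝ, 1 ≤ C ∧ ∀ lam : ℝ, 1 ≤ lam → ∃ D : ℝ, 1 ≤ D ∧ ∀ t : ℝ, 0 ≤ t →
        omegaM M (lam * t) ≤ C * lam * omegaM M t + D * lam) ↔
      (∃ C : ℕ, 1 ≤ C ∧ ∃ B : ℝ, 1 ≤ B ∧ ∀ lam : ℕ, 1 ≤ lam → ∃ D : ℝ, 1 ≤ D ∧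
        ∀ p : ℕ, 1 ≤ p → (lam : ℝ) * (M p) ^ (1 / (p : ℝ)) ≤
          B * D ^ (1 / (p : ℝ)) * (M (lam * C * p)) ^ (1 / ((lam : ℝ) * C * p)))) ∧
    ((∃ C : ℝ, 1 ≤ C ∧ ∀ lam : ℝ, 1 ≤ lam → ∃ D : ℝ, 1 ≤ D ∧ ∀ t : ℝ, 0 ≤ t →
        omegaM M (lam * t) ≤ C * lam * omegaM M t + D * lam) ↔
      (∃ C : ℕ, 1 ≤ C ∧ ∃ A : ℝ, 1 ≤ A ∧ ∀ lam : ℕ, 1 ≤ lam → ∃ D : ℝ, 1 ≤ D ∧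
        ∀ p : ℕ, 1 ≤ p → (mseq M p) ^ (1 / (p : ℝ)) ≤
          A * D ^ (1 / (p : ℝ)) * (mseq M (lam * C * p)) ^ (1 / ((lam : ℝ) * C * p)))) :=
  ⟨hM.alpha1_iff_logRootCond.trans (rootCond_iff_logRootCond hM.1).symm,
    hM.alpha1_iff_logRootCond.trans (rootCondMseq_iff_logRootCond hM.1).symm⟩
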